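/- Let $K$ be a field, $w \in K$ a primitive $N$-th root of unity ($N \ge 2$), and $i, j \in \mathbb{Z}$. For parameters $(a,b) \in \mathbb{Z}^2$ define $R_{a,b}(k,l) = w^{b-l} - w^{k-1-a}$ for $0 \le l < k$, $R_{a,b}(k,k)=1$, and $\lambda_{a,b}(k,l)$ by the recursion $\lambda_{a,b}(0,0)=1$, $\lambda_{a,b}(k,0)=R_{a,b}(k,0)\lambda_{a,b}(k-1,0)$, $\lambda_{a,b}(k,l)=R_{a,b}(k,l)\lambda_{a,b}(k-1,l)+\lambda_{a,b}(k-1,l-1)$ for $0<l<k$, $\lambda_{a,b}(k,k)=1$. Let $m \ge 0$ be the smallest integer with $R_{i,j}(m+1,0)=0$. Then for all $k > m$ and $m+1 \le l \le k$: $\lambda_{i,j}(k,l) = \lambda_{i-(m+1),\, j-(m+1)}(k-(m+1),\, l-(m+1))$. -/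
import Mathlib


/-- `R_{a,b}(k,l) = w^{b-l} - w^{k-1-a}` for `l < k`, and `R_{a,b}(k,k) = 1`. -/
def Rc {K : Type*} [Field K] (w : K) (a b : ℤ) (k l : ℕ) : K :=
  if l < k then w ^ (b - (l : ℤ)) - w ^ ((k : ℤ) - 1 - a) else 1

/-- The recursively defined coefficients `λ_{a,b}(k,l)`. -/
def lam {K : Type*} [Field K] (w : K) (a b : ℤ) : ℕ → ℕ → K
  | 0, 0 => 1
  | 0, _ + 1 => 0
  | k + 1, 0 => Rc w a b (k + 1) 0 * lam w a b k 0
  | k + 1, l + 1 =>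
      if l + 1 = k + 1 then 1
      else if l + 1 < k + 1 then
        Rc w a b (k + 1) (l + 1) * lam w a b k (l + 1) + lam w a b k l
      else 0

section Aux

variable {K : Type*} [Field K]

/-- Gaussian binomial coefficients. -/
def qb (w : K) : ℕ → ℕ → K
  | 0, 0 => 1
  | 0, _ + 1 => 0
  | _ + 1, 0 => 1
  | k + 1, l + 1 => w ^ (l + 1) * qb w k (l + 1) + qb w k l

/-- `Qp w a b l d = ∏_{t=0}^{d-1} (w^{b-l} - w^{t-a})`. -/
def Qp (w : K) (a b : ℤ) (l : ℕ) : ℕ → K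
  | 0 => 1
  | d + 1 => Qp w a b l d * (w ^ (b - (l : ℤ)) - w ^ ((d : ℤ) - a))

lemma qb_eq_zero (w : K) : ∀ k l : ℕ, k < l → qb w k l = 0 := by
  intro k
  induction k with
  | zero =>
    intro l hl
    match l, hl with
    | l + 1, _ => rfl
  | succ k ih =>
    intro l hl
    match l, hl with
    | l + 1, hl =>
      show w ^ (l + 1) * qb w k (l + 1) + qb w k l = 0
      rw [ih (l + 1) (by omega), ih l (by omega)]
      ring

lemma qb_diag (w : K) : ∀ n : ℕ, qb w n n = 1 := by
  intro n
  induction n with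
  | zero => rfl
  | succ n ih =>
    show w ^ (n + 1) * qb w n (n + 1) + qb w n n = 1
    rw [qb_eq_zero w n (n + 1) (by omega), ih]
    ring

lemma qb_pascal (w : K) : ∀ k l : ℕ, l ≤ k →
    qb w (k + 1) (l + 1) = qb w k (l + 1) + w ^ (k - l) * qb w k l := by
  intro k
  induction k with
  | zero =>
    intro l hl
    interval_cases l
    show w ^ 1 * qb w 0 1 + qb w 0 0 = qb w 0 1 + w ^ 0 * qb w 0 0
    show w ^ 1 * 0 + 1 = 0 + w ^ 0 * 1
    ring
  | succ k ih =>
    intro l _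
    match l with
    | 0 =>
      have d1 : qb w (k + 2) 1 = w ^ 1 * qb w (k + 1) 1 + qb w (k + 1) 0 := rfl
      have h1 : qb w (k + 1) 1 = w ^ 1 * qb w k 1 + qb w k 0 := rfl
      have h2 : qb w (k + 1) 1 = qb w k 1 + w ^ (k - 0) * qb w k 0 := ih 0 (by omega)
      have h0 : qb w (k + 1) 0 = 1 := by cases k <;> rfl
      have hk : qb w k 0 = 1 := by cases k <;> rfl
      have hp : w ^ 1 * w ^ (k - 0) = w ^ (k + 1 - 0) := by
        rw [← pow_add]; congr 1; omega
      rw [h0] at d1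
      rw [hk] at h1 h2
      linear_combination d1 + w ^ 1 * h2 - h1 + hp - w ^ (k + 1 - 0) * h0
    | s + 1 =>
      by_cases hs : s + 1 ≤ k
      · have d2 : qb w (k + 2) (s + 2)
            = w ^ (s + 2) * qb w (k + 1) (s + 2) + qb w (k + 1) (s + 1) := rfl
        have d1 : qb w (k + 1) (s + 2) = w ^ (s + 2) * qb w k (s + 2) + qb w k (s + 1) := rfl
        have d0 : qb w (k + 1) (s + 1) = w ^ (s + 1) * qb w k (s + 1) + qb w k s := rfl
        have ih2 : qb w (k + 1) (s + 2) = qb w k (s + 2) + w ^ (k - (s + 1)) * qb w k (s + 1) :=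
          ih (s + 1) hs
        have ih1 : qb w (k + 1) (s + 1) = qb w k (s + 1) + w ^ (k - s) * qb w k s :=
          ih s (by omega)
        have hpq : w ^ (s + 2) * w ^ (k - (s + 1)) = w ^ (k - s) * w ^ (s + 1) := by
          rw [← pow_add, ← pow_add]; congr 1; omega
        have e1 : (w ^ (s + 2) - 1) * qb w (k + 1) (s + 2)
            = (w ^ (s + 2) * w ^ (k - (s + 1)) - 1) * qb w k (s + 1) := by
          linear_combination w ^ (s + 2) * ih2 - d1
        have e2 : (w ^ (k - s) - 1) * qb w (k + 1) (s + 1)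
            = (w ^ (k - s) * w ^ (s + 1) - 1) * qb w k (s + 1) := by
          linear_combination w ^ (k - s) * d0 - ih1
        have he : (k + 1) - (s + 1) = k - s := by omega
        rw [he]
        linear_combination d2 + e1 - e2 + qb w k (s + 1) * hpq
      · have hz : qb w (k + 1) (s + 2) = 0 := qb_eq_zero w _ _ (by omega)
        have hd2 : qb w (k + 2) (s + 2) = 1 := by
          rw [show s + 2 = k + 2 by omega]; exact qb_diag w (k + 2)
        have hd1 : qb w (k + 1) (s + 1) = 1 := by
          rw [show s + 1 = k + 1 by omega]; exact qb_diag w (k + 1)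
        rw [hd2, hz, hd1, show (k + 1) - (s + 1) = 0 by omega]
        ring

lemma pow_zpow {w : K} (hw0 : w ≠ 0) (n : ℕ) (x : ℤ) :
    w ^ n * w ^ x = w ^ ((n : ℤ) + x) := by
  rw [← zpow_natCast w n, ← zpow_add₀ hw0]

lemma Qp_shift {w : K} (hw0 : w ≠ 0) (a b : ℤ) (l : ℕ) : ∀ d : ℕ,
    Qp w a b l (d + 1)
      = w ^ (d + 1) * (w ^ (b - (l : ℤ) - 1) - w ^ (-1 - a)) * Qp w a b (l + 1) d := by
  intro d
  induction d with
  | zero =>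
    show (1 : K) * (w ^ (b - (l : ℤ)) - w ^ (((0 : ℕ) : ℤ) - a))
      = w ^ 1 * (w ^ (b - (l : ℤ) - 1) - w ^ (-1 - a)) * 1
    rw [one_mul, mul_one, mul_sub, pow_zpow hw0, pow_zpow hw0]
    congr 2 <;> push_cast <;> ring
  | succ d ih =>
    show Qp w a b l (d + 1) * (w ^ (b - (l : ℤ)) - w ^ (((d + 1 : ℕ) : ℤ) - a))
      = w ^ (d + 2) * (w ^ (b - (l : ℤ) - 1) - w ^ (-1 - a))
        * (Qp w a b (l + 1) d * (w ^ (b - ((l + 1 : ℕ) : ℤ)) - w ^ ((d : ℤ) - a)))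
    rw [ih]
    have key : (w ^ (b - (l : ℤ)) - w ^ (((d + 1 : ℕ) : ℤ) - a))
        = w ^ 1 * (w ^ (b - ((l + 1 : ℕ) : ℤ)) - w ^ ((d : ℤ) - a)) := by
      rw [mul_sub, pow_zpow hw0, pow_zpow hw0]
      congr 2 <;> push_cast <;> ring
    rw [key]
    have hp : w ^ (d + 1) * w ^ 1 = w ^ (d + 2) := by rw [← pow_add]
    linear_combination (w ^ (b - (l : ℤ) - 1) - w ^ (-1 - a)) * Qp w a b (l + 1) d
        * (w ^ (b - ((l + 1 : ℕ) : ℤ)) - w ^ ((d : ℤ) - a)) * hp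

lemma lam_closed {w : K} (hw0 : w ≠ 0) (a b : ℤ) : ∀ k l : ℕ, l ≤ k →
    lam w a b k l = qb w k l * Qp w a b l (k - l) := by
  intro k
  induction k with
  | zero =>
    intro l hl
    interval_cases l
    show (1 : K) = qb w 0 0 * Qp w a b 0 0
    show (1 : K) = 1 * 1
    ring
  | succ k ih =>
    intro l hl
    match l with
    | 0 =>
      show Rc w a b (k + 1) 0 * lam w a b k 0 = qb w (k + 1) 0 * Qp w a b 0 (k + 1 - 0)
      rw [ih 0 (by omega)]
      have h0 : qb w (k + 1) 0 = 1 := by cases k <;> rfl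
      have hk : qb w k 0 = 1 := by cases k <;> rfl
      have hq : Qp w a b 0 (k + 1 - 0)
          = Qp w a b 0 k * (w ^ (b - ((0 : ℕ) : ℤ)) - w ^ ((k : ℤ) - a)) := by
        rw [Nat.sub_zero]; rfl
      have hr : Rc w a b (k + 1) 0 = w ^ (b - ((0 : ℕ) : ℤ)) - w ^ ((k : ℤ) - a) := by
        rw [Rc, if_pos (by omega)]
        congr 2
        push_cast; ring
      rw [h0, hk, hq, hr, Nat.sub_zero]
      ring
    | s + 1 =>
      by_cases hd : s + 1 = k + 1
      · have hsk : s = k := by omega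
        subst hsk
        show (if s + 1 = s + 1 then (1:K) else _) = _
        rw [if_pos rfl, Nat.sub_self, qb_diag]
        show (1 : K) = 1 * 1
        ring
      · have hlt : s + 1 < k + 1 := by omega
        have hsle : s + 1 ≤ k := by omega
        show (if s + 1 = k + 1 then (1:K)
          else if s + 1 < k + 1 then
            Rc w a b (k + 1) (s + 1) * lam w a b k (s + 1) + lam w a b k s
          else 0) = _
        rw [if_neg hd, if_pos hlt, ih (s + 1) hsle, ih s (by omega)]
        set e := w ^ (b - (s : ℤ) - 1) with he
        have hr : Rc w a b (k + 1) (s + 1) = e - w ^ ((k : ℤ) - a) := by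
          rw [Rc, if_pos hlt, he]
          congr 2 <;> push_cast <;> ring
        have hks : k - s = (k - (s + 1)) + 1 := by omega
        have hks1 : k + 1 - (s + 1) = (k - (s + 1)) + 1 := by omega
        set Q := Qp w a b (s + 1) (k - (s + 1)) with hQ
        set A := qb w k (s + 1) with hA
        set B := qb w k s with hB
        have hq1 : Qp w a b (s + 1) (k + 1 - (s + 1))
            = Q * (e - w ^ (((k - (s + 1) : ℕ) : ℤ) - a)) := by
          rw [hks1]
          show Q * (w ^ (b - ((s + 1 : ℕ) : ℤ)) - w ^ (((k - (s + 1) : ℕ) : ℤ) - a)) = _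
          rw [he]
          congr 3
          push_cast; ring
        have hq2 : Qp w a b s (k - s)
            = w ^ (k - s) * (e - w ^ (-1 - a)) * Q := by
          rw [hks]
          have := Qp_shift hw0 a b s (k - (s + 1))
          rw [this, ← hks, he]
        have hqb1 : qb w (k + 1) (s + 1) = w ^ (s + 1) * A + B := rfl
        have hqb2 : qb w (k + 1) (s + 1) = A + w ^ (k - s) * B := qb_pascal w k s (by omega)
        have p1 : w ^ (s + 1) * w ^ (((k - (s + 1) : ℕ) : ℤ) - a) = w ^ ((k : ℤ) - a) := by
          rw [pow_zpow hw0]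
          congr 1
          have hc : ((k - (s + 1) : ℕ) : ℤ) = (k : ℤ) - (s + 1) := by omega
          rw [hc]; push_cast; ring
        have p2 : w ^ (k - s) * w ^ (-1 - a) = w ^ (((k - (s + 1) : ℕ) : ℤ) - a) := by
          rw [pow_zpow hw0]
          congr 1
          have hc1 : ((k - s : ℕ) : ℤ) = (k : ℤ) - s := by omega
          have hc2 : ((k - (s + 1) : ℕ) : ℤ) = (k : ℤ) - (s + 1) := by omega
          rw [hc1, hc2]; push_cast; ring
        have scal : qb w (k + 1) (s + 1) * (e - w ^ (((k - (s + 1) : ℕ) : ℤ) - a))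
            = (e - w ^ ((k : ℤ) - a)) * A + w ^ (k - s) * (e - w ^ (-1 - a)) * B := by
          linear_combination e * hqb2 - w ^ (((k - (s + 1) : ℕ) : ℤ) - a) * hqb1
            - A * p1 + B * p2
        rw [hr, hq1, hq2]
        linear_combination (-Q) * scal

lemma Qp_zero {w : K} (a b : ℤ) (l : ℕ) : ∀ d t : ℕ, t < d →
    w ^ (b - (l : ℤ)) - w ^ ((t : ℤ) - a) = 0 → Qp w a b l d = 0 := by
  intro d
  induction d with
  | zero => intro t ht; omega
  | succ d ih =>
    intro t ht h0
    show Qp w a b l d * (w ^ (b - (l : ℤ)) - w ^ ((d : ℤ) - a)) = 0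
    by_cases htd : t = d
    · subst htd; rw [h0, mul_zero]
    · rw [ih t (by omega) h0, zero_mul]

end Aux

theorem stmt16 {K : Type*} [Field K] (N : ℕ) (hN : 2 ≤ N)
    (w : K) (hw : IsPrimitiveRoot w N) (i j : ℤ)
    (m : ℕ) (hm : Rc w i j (m + 1) 0 = 0)
    (hmin : ∀ k : ℕ, k < m → Rc w i j (k + 1) 0 ≠ 0) :
    ∀ k l : ℕ, m < k → m + 1 ≤ l → l ≤ k →
      lam w i j k l =
        lam w (i - (m + 1)) (j - (m + 1)) (k - (m + 1)) (l - (m + 1)) := by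
  have hw0 : w ≠ 0 := hw.ne_zero (by omega)
  -- key vanishing: w^j = w^(m - i)
  have hmz : w ^ (j : ℤ) - w ^ ((m : ℤ) - i) = 0 := by
    have h := hm
    rw [Rc, if_pos (by omega)] at h
    convert h using 3
    · push_cast; ring
    · push_cast; ring
  -- zero lemma
  have hzero : ∀ k l : ℕ, m < k → l ≤ m → lam w i j k l = 0 := by
    intro k l hk hl
    rw [lam_closed hw0 i j k l (by omega)]
    have hfac : w ^ (j - (l : ℤ)) - w ^ (((m - l : ℕ) : ℤ) - i) = 0 := by
      have hc : ((m - l : ℕ) : ℤ) = (m : ℤ) - l := by omega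
      rw [hc]
      have e1 : j - (l : ℤ) = -(l : ℤ) + j := by ring
      have e2 : (m : ℤ) - l - i = -(l : ℤ) + ((m : ℤ) - i) := by ring
      rw [e1, e2, zpow_add₀ hw0, zpow_add₀ hw0, ← mul_sub, hmz, mul_zero]
    rw [Qp_zero i j l (k - l) (m - l) (by omega) hfac, mul_zero]
  -- diagonal lemma
  have hdiag : ∀ (a b : ℤ) (n : ℕ), lam w a b n n = 1 := by
    intro a b n
    cases n with
    | zero => rfl
    | succ n =>
      show (if n + 1 = n + 1 then (1:K) else _) = 1
      rw [if_pos rfl]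
  -- main induction
  intro k
  induction k with
  | zero => intro l h; omega
  | succ k ih =>
    intro l hmk hml hlk
    by_cases hdg : l = k + 1
    · subst hdg
      rw [hdiag, hdiag]
    · have hlk' : l ≤ k := by omega
      have hmk' : m < k := by omega
      obtain ⟨l0, rfl⟩ : ∃ l0, l = l0 + 1 := ⟨l - 1, by omega⟩
      have hstep : lam w i j (k + 1) (l0 + 1)
          = Rc w i j (k + 1) (l0 + 1) * lam w i j k (l0 + 1) + lam w i j k l0 := by
        show (if l0 + 1 = k + 1 then (1:K)
          else if l0 + 1 < k + 1 then
            Rc w i j (k + 1) (l0 + 1) * lam w i j k (l0 + 1) + lam w i j k l0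
          else 0) = _
        rw [if_neg hdg, if_pos (by omega)]
      rw [hstep]
      have hRc : Rc w i j (k + 1) (l0 + 1)
          = Rc w (i - (m + 1)) (j - (m + 1)) (k + 1 - (m + 1)) (l0 + 1 - (m + 1)) := by
        have h1 : j - ((l0 + 1 : ℕ) : ℤ)
            = (j - (m + 1)) - ((l0 + 1 - (m + 1) : ℕ) : ℤ) := by omega
        have h2 : ((k + 1 : ℕ) : ℤ) - 1 - i
            = ((k + 1 - (m + 1) : ℕ) : ℤ) - 1 - (i - (m + 1)) := by omega
        rw [Rc, Rc, if_pos (by omega), if_pos (by omega), h1, h2]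
      by_cases hl0 : l0 = m
      · have hl0' : m = l0 := hl0.symm
        subst hl0'
        rw [hzero k m hmk' (le_refl m), add_zero]
        have hih : lam w i j k (m + 1)
            = lam w (i - (m + 1)) (j - (m + 1)) (k - (m + 1)) 0 := by
          have h := ih (m + 1) hmk' (le_refl _) (by omega)
          simpa using h
        rw [hih]
        have hk1 : k + 1 - (m + 1) = (k - (m + 1)) + 1 := by omega
        have hrhs : lam w (i - (m + 1)) (j - (m + 1)) (k + 1 - (m + 1)) (m + 1 - (m + 1))
            = Rc w (i - (m + 1)) (j - (m + 1)) (k + 1 - (m + 1)) 0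
              * lam w (i - (m + 1)) (j - (m + 1)) (k - (m + 1)) 0 := by
          rw [Nat.sub_self, hk1]
          rfl
        rw [hrhs]
        rw [Nat.sub_self] at hRc
        rw [hRc]
      · have hml0 : m + 1 ≤ l0 := by omega
        have ih1 : lam w i j k (l0 + 1)
            = lam w (i - (m + 1)) (j - (m + 1)) (k - (m + 1)) (l0 + 1 - (m + 1)) :=
          ih (l0 + 1) hmk' (by omega) hlk'
        have ih0 : lam w i j k l0
            = lam w (i - (m + 1)) (j - (m + 1)) (k - (m + 1)) (l0 - (m + 1)) :=
          ih l0 hmk' hml0 (by omega)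
        rw [ih1, ih0, hRc]
        have hk1 : k + 1 - (m + 1) = (k - (m + 1)) + 1 := by omega
        have hl1 : l0 + 1 - (m + 1) = (l0 - (m + 1)) + 1 := by omega
        have hrhs : lam w (i - (m + 1)) (j - (m + 1)) (k + 1 - (m + 1)) (l0 + 1 - (m + 1))
            = Rc w (i - (m + 1)) (j - (m + 1)) (k + 1 - (m + 1)) (l0 + 1 - (m + 1))
              * lam w (i - (m + 1)) (j - (m + 1)) (k - (m + 1)) (l0 + 1 - (m + 1))
              + lam w (i - (m + 1)) (j - (m + 1)) (k - (m + 1)) (l0 - (m + 1)) := by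
          rw [hk1, hl1]
          show (if (l0 - (m + 1)) + 1 = (k - (m + 1)) + 1 then (1:K)
            else if (l0 - (m + 1)) + 1 < (k - (m + 1)) + 1 then
              Rc w (i - (m + 1)) (j - (m + 1)) ((k - (m + 1)) + 1) ((l0 - (m + 1)) + 1)
                * lam w (i - (m + 1)) (j - (m + 1)) (k - (m + 1)) ((l0 - (m + 1)) + 1)
                + lam w (i - (m + 1)) (j - (m + 1)) (k - (m + 1)) (l0 - (m + 1))
            else 0) = _
          rw [if_neg (by omega), if_pos (by omega), ← hl1, ← hk1]
        rw [hrhs, hl1]
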